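/- arXiv:2604.06643 — 2 statements merged into one kernel-verified Lean document; each statement's English description precedes it below -/
import Mathlib

section
/- Let λ be continuous on [b̲, b̄] and h measurable with 0 < h ≤ M. If λ is weakly increasing, then for any b₂ < b₁ with both intervals [b₂, b₂ + r] and [b₁, b₁ + r] contained in [b̲, b̄] (r > 0), we have (∫_{b₂}^{b₂+r} λh)·(∫_{b₁}^{b₁+r} h) ≤ (∫_{b₁}^{b₁+r} λh)·(∫_{b₂}^{b₂+r} h). Conversely, if λ is not weakly increasing, there exist b₂ < b₁ and r > 0 (which can be chosen with b₁, b₂ of the form b̲ + (j/q)(b̄−b̲) and r = (b̄−b̲)/q for some integer q ≥ 2) for which the inequality fails strictly. -/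
/-!
If `λ` is increasing and `[x₂, y₂]` lies to the left of `[x₁, y₁]`, then `λ ≤ λ y₂` on the first
interval and `λ y₂ ≤ λ` on the second, so the two weighted averages are separated by `λ y₂`;
overlapping intervals are cut at their endpoints into three pairwise ordered pieces. Conversely, if
`λ y < λ x` with `x < y`, uniform continuity keeps `λ` above `λ x - ε` on the grid cell containing
`x` and below `λ y + ε` on the one containing `y` once the mesh is small, and the positive weight
`h` turns this gap into a strict inequality.
-/

open Set MeasureTheory

theorem MeasureTheory.IntegrableOn.intervalIntegrable_of_Icc_subset {f : ℝ → ℝ} {s : Set ℝ}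
    {a b : ℝ} (hf : IntegrableOn f s) (hab : a ≤ b) (hs : Icc a b ⊆ s) :
    IntervalIntegrable f volume a b :=
  (hf.mono_set (by rwa [uIcc_of_le hab])).intervalIntegrable

section WeightedIntegral

variable {lam h : ℝ → ℝ} {s : Set ℝ}

theorem integral_mul_le_const_mul_integral {a b c : ℝ} (hab : a ≤ b)
    (hlh : IntervalIntegrable (fun t => lam t * h t) volume a b)
    (hh : IntervalIntegrable h volume a b) (h0 : ∀ t ∈ Icc a b, 0 ≤ h t)
    (hle : ∀ t ∈ Icc a b, lam t ≤ c) :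
    ∫ t in a..b, lam t * h t ≤ c * ∫ t in a..b, h t := by
  rw [← intervalIntegral.integral_const_mul]
  exact intervalIntegral.integral_mono_on hab hlh (hh.const_mul c)
    fun t ht => mul_le_mul_of_nonneg_right (hle t ht) (h0 t ht)

theorem const_mul_integral_le_integral_mul {a b c : ℝ} (hab : a ≤ b)
    (hlh : IntervalIntegrable (fun t => lam t * h t) volume a b)
    (hh : IntervalIntegrable h volume a b) (h0 : ∀ t ∈ Icc a b, 0 ≤ h t)
    (hge : ∀ t ∈ Icc a b, c ≤ lam t) :
    c * ∫ t in a..b, h t ≤ ∫ t in a..b, lam t * h t := by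
  rw [← intervalIntegral.integral_const_mul]
  exact intervalIntegral.integral_mono_on hab (hh.const_mul c) hlh
    fun t ht => mul_le_mul_of_nonneg_right (hge t ht) (h0 t ht)

theorem integral_mul_mul_integral_le_of_monotoneOn_of_le_of_le (hm : MonotoneOn lam s)
    (hh : IntegrableOn h s) (hlh : IntegrableOn (fun t => lam t * h t) s)
    (h0 : ∀ t ∈ s, 0 ≤ h t) {x₂ y₂ x₁ y₁ : ℝ} (h₂ : x₂ ≤ y₂) (h₂₁ : y₂ ≤ x₁) (h₁ : x₁ ≤ y₁)
    (hs : Icc x₂ y₁ ⊆ s) :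
    (∫ t in x₂..y₂, lam t * h t) * (∫ t in x₁..y₁, h t) ≤
      (∫ t in x₁..y₁, lam t * h t) * (∫ t in x₂..y₂, h t) := by
  have hs₂ : Icc x₂ y₂ ⊆ s := (Icc_subset_Icc_right (h₂₁.trans h₁)).trans hs
  have hs₁ : Icc x₁ y₁ ⊆ s := (Icc_subset_Icc_left (h₂.trans h₂₁)).trans hs
  have hy₂ : y₂ ∈ s := hs ⟨h₂, h₂₁.trans h₁⟩
  have left : ∫ t in x₂..y₂, lam t * h t ≤ lam y₂ * ∫ t in x₂..y₂, h t :=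
    integral_mul_le_const_mul_integral h₂ (hlh.intervalIntegrable_of_Icc_subset h₂ hs₂)
      (hh.intervalIntegrable_of_Icc_subset h₂ hs₂) (fun t ht => h0 t (hs₂ ht))
      fun t ht => hm (hs₂ ht) hy₂ ht.2
  have right : lam y₂ * ∫ t in x₁..y₁, h t ≤ ∫ t in x₁..y₁, lam t * h t :=
    const_mul_integral_le_integral_mul h₁ (hlh.intervalIntegrable_of_Icc_subset h₁ hs₁)
      (hh.intervalIntegrable_of_Icc_subset h₁ hs₁) (fun t ht => h0 t (hs₁ ht))
      fun t ht => hm hy₂ (hs₁ ht) (h₂₁.trans ht.1)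
  have H₁ : 0 ≤ ∫ t in x₁..y₁, h t := intervalIntegral.integral_nonneg h₁ fun t ht => h0 t (hs₁ ht)
  have H₂ : 0 ≤ ∫ t in x₂..y₂, h t := intervalIntegral.integral_nonneg h₂ fun t ht => h0 t (hs₂ ht)
  calc (∫ t in x₂..y₂, lam t * h t) * (∫ t in x₁..y₁, h t)
      ≤ (lam y₂ * ∫ t in x₂..y₂, h t) * ∫ t in x₁..y₁, h t := mul_le_mul_of_nonneg_right left H₁
    _ = (lam y₂ * ∫ t in x₁..y₁, h t) * ∫ t in x₂..y₂, h t := by ring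
    _ ≤ (∫ t in x₁..y₁, lam t * h t) * ∫ t in x₂..y₂, h t := mul_le_mul_of_nonneg_right right H₂

theorem integral_mul_mul_integral_le_of_monotoneOn (hm : MonotoneOn lam s)
    (hh : IntegrableOn h s) (hlh : IntegrableOn (fun t => lam t * h t) s)
    (h0 : ∀ t ∈ s, 0 ≤ h t) {x₂ y₂ x₁ y₁ : ℝ} (h₂ : x₂ ≤ y₂) (h₁ : x₁ ≤ y₁) (hx : x₂ ≤ x₁)
    (hy : y₂ ≤ y₁) (hs : Icc x₂ y₁ ⊆ s) :
    (∫ t in x₂..y₂, lam t * h t) * (∫ t in x₁..y₁, h t) ≤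
      (∫ t in x₁..y₁, lam t * h t) * (∫ t in x₂..y₂, h t) := by
  rcases le_total y₂ x₁ with h₂₁ | h₁₂
  · exact integral_mul_mul_integral_le_of_monotoneOn_of_le_of_le hm hh hlh h0 h₂ h₂₁ h₁ hs
  have key {a b c d : ℝ} (hab : a ≤ b) (hbc : b ≤ c) (hcd : c ≤ d) (ha : x₂ ≤ a) (hd : d ≤ y₁) :=
    integral_mul_mul_integral_le_of_monotoneOn_of_le_of_le hm hh hlh h0 hab hbc hcd
      ((Icc_subset_Icc ha hd).trans hs)
  have ii {f : ℝ → ℝ} (hf : IntegrableOn f s) {a b : ℝ} (ha : x₂ ≤ a) (hab : a ≤ b)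
      (hb : b ≤ y₁) : IntervalIntegrable f volume a b :=
    hf.intervalIntegrable_of_Icc_subset hab ((Icc_subset_Icc ha hb).trans hs)
  rw [← intervalIntegral.integral_add_adjacent_intervals (ii hlh le_rfl hx h₁)
      (ii hlh hx h₁₂ hy), ← intervalIntegral.integral_add_adjacent_intervals
      (ii hlh hx h₁₂ hy) (ii hlh h₂ hy le_rfl),
    ← intervalIntegral.integral_add_adjacent_intervals (ii hh le_rfl hx h₁)
      (ii hh hx h₁₂ hy), ← intervalIntegral.integral_add_adjacent_intervals
      (ii hh hx h₁₂ hy) (ii hh h₂ hy le_rfl)]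
  linear_combination key hx le_rfl h₁₂ le_rfl hy + key h₁₂ le_rfl hy hx le_rfl +
    key hx h₁₂ hy le_rfl le_rfl

theorem integral_mul_mul_integral_lt_of_le_of_le {c₁ c₂ : ℝ} (hc : c₁ < c₂)
    (hh : IntegrableOn h s) (hlh : IntegrableOn (fun t => lam t * h t) s)
    (hpos : ∀ t ∈ s, 0 < h t) {a₁ b₁ a₂ b₂ : ℝ} (hab₁ : a₁ < b₁) (hab₂ : a₂ < b₂)
    (hs₁ : Icc a₁ b₁ ⊆ s) (hs₂ : Icc a₂ b₂ ⊆ s) (hle : ∀ t ∈ Icc a₁ b₁, lam t ≤ c₁)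
    (hge : ∀ t ∈ Icc a₂ b₂, c₂ ≤ lam t) :
    (∫ t in a₁..b₁, lam t * h t) * (∫ t in a₂..b₂, h t) <
      (∫ t in a₂..b₂, lam t * h t) * (∫ t in a₁..b₁, h t) := by
  have hh₁ := hh.intervalIntegrable_of_Icc_subset hab₁.le hs₁
  have hh₂ := hh.intervalIntegrable_of_Icc_subset hab₂.le hs₂
  have H₁ : 0 < ∫ t in a₁..b₁, h t :=
    intervalIntegral.intervalIntegral_pos_of_pos_on hh₁
      (fun t ht => hpos t (hs₁ (Ioo_subset_Icc_self ht))) hab₁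
  have H₂ : 0 < ∫ t in a₂..b₂, h t :=
    intervalIntegral.intervalIntegral_pos_of_pos_on hh₂
      (fun t ht => hpos t (hs₂ (Ioo_subset_Icc_self ht))) hab₂
  have upper : ∫ t in a₁..b₁, lam t * h t ≤ c₁ * ∫ t in a₁..b₁, h t :=
    integral_mul_le_const_mul_integral hab₁.le (hlh.intervalIntegrable_of_Icc_subset hab₁.le hs₁)
      hh₁ (fun t ht => (hpos t (hs₁ ht)).le) hle
  have lower : c₂ * ∫ t in a₂..b₂, h t ≤ ∫ t in a₂..b₂, lam t * h t :=
    const_mul_integral_le_integral_mul hab₂.le (hlh.intervalIntegrable_of_Icc_subset hab₂.le hs₂)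
      hh₂ (fun t ht => (hpos t (hs₂ ht)).le) hge
  calc (∫ t in a₁..b₁, lam t * h t) * (∫ t in a₂..b₂, h t)
      ≤ c₁ * (∫ t in a₁..b₁, h t) * ∫ t in a₂..b₂, h t := mul_le_mul_of_nonneg_right upper H₂.le
    _ < c₂ * (∫ t in a₂..b₂, h t) * ∫ t in a₁..b₁, h t := by
      rw [mul_right_comm]; gcongr
    _ ≤ (∫ t in a₂..b₂, lam t * h t) * ∫ t in a₁..b₁, h t := mul_le_mul_of_nonneg_right lower H₁.le

end WeightedIntegral

section Grid

def gridCell (bl bu : ℝ) (q j : ℕ) : Set ℝ :=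
  Icc (bl + ((j : ℝ) / q) * (bu - bl)) (bl + ((j : ℝ) / q) * (bu - bl) + (bu - bl) / q)

variable {bl bu : ℝ} {q j : ℕ}

theorem exists_nat_lt_mem_Icc {u : ℝ} (hq : 0 < q) (hu : u ∈ Icc (0 : ℝ) q) :
    ∃ j < q, u ∈ Icc (j : ℝ) (j + 1) := by
  rcases hu.2.lt_or_eq with hlt | rfl
  · exact ⟨⌊u⌋₊, (Nat.floor_lt hu.1).2 hlt, Nat.floor_le hu.1, (Nat.lt_floor_add_one u).le⟩
  · refine ⟨q - 1, by omega, ?_⟩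
    rw [Nat.cast_sub hq, Nat.cast_one]
    constructor <;> linarith

theorem exists_mem_gridCell {x : ℝ} (hx : x ∈ Icc bl bu) (hlt : bl < bu) (hq : 0 < q) :
    ∃ j < q, x ∈ gridCell bl bu q j := by
  have hq' : (0 : ℝ) < q := Nat.cast_pos.2 hq
  have hw : 0 < bu - bl := sub_pos.2 hlt
  set u := (x - bl) / (bu - bl) * q
  have hu : u ∈ Icc (0 : ℝ) q := by
    refine ⟨by have := hx.1; positivity, mul_le_of_le_one_left hq'.le ?_⟩
    rw [div_le_one hw]
    linarith [hx.2]
  obtain ⟨j, hj, hju, huj⟩ := exists_nat_lt_mem_Icc hq hu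
  have hxu : x = bl + (u / q) * (bu - bl) := by
    simp only [u]; field_simp; ring
  refine ⟨j, hj, ?_, ?_⟩ <;> rw [hxu]
  · gcongr
  · calc bl + (u / q) * (bu - bl) ≤ bl + ((j + 1) / q) * (bu - bl) := by gcongr
      _ = _ := by ring

theorem gridCell_subset_Icc (hle : bl ≤ bu) (hj : j < q) : gridCell bl bu q j ⊆ Icc bl bu := by
  have hq : (0 : ℝ) < q := Nat.cast_pos.2 (j.zero_le.trans_lt hj)
  have hjq : (j : ℝ) + 1 ≤ q := by exact_mod_cast hj
  have hw : 0 ≤ bu - bl := sub_nonneg.2 hle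
  refine Icc_subset_Icc (le_add_of_nonneg_right (by positivity)) ?_
  calc bl + (j / q) * (bu - bl) + (bu - bl) / q = bl + ((j + 1) / q) * (bu - bl) := by ring
    _ ≤ bl + 1 * (bu - bl) := by gcongr; rwa [div_le_one hq]
    _ = bu := by ring

theorem dist_le_of_mem_gridCell {x y : ℝ} (hx : x ∈ gridCell bl bu q j)
    (hy : y ∈ gridCell bl bu q j) : dist x y ≤ (bu - bl) / q := by
  simpa only [add_sub_cancel_left] using Real.dist_le_of_mem_Icc hx hy

theorem sub_le_of_mem_gridCell_of_le {k : ℕ} {x y : ℝ} (hle : bl ≤ bu) (hjk : j ≤ k)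
    (hy : y ∈ gridCell bl bu q j) (hx : x ∈ gridCell bl bu q k) : y - x ≤ (bu - bl) / q := by
  have hw : 0 ≤ bu - bl := sub_nonneg.2 hle
  have hjk' : bl + ((j : ℝ) / q) * (bu - bl) ≤ bl + ((k : ℝ) / q) * (bu - bl) := by
    gcongr
  linarith [hy.2, hx.1]

theorem exists_gridCell_mem_of_lt {x y δ : ℝ} (hx : x ∈ Icc bl bu) (hy : y ∈ Icc bl bu)
    (hxy : x < y) (hδ : 0 < δ) :
    ∃ q : ℕ, 2 ≤ q ∧ (bu - bl) / q < δ ∧ ∃ j₁ j₂ : ℕ, j₁ < q ∧ j₂ < q ∧ j₂ < j₁ ∧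
      x ∈ gridCell bl bu q j₂ ∧ y ∈ gridCell bl bu q j₁ := by
  have hblu : bl < bu := hx.1.trans_lt (hxy.trans_le hy.2)
  obtain ⟨n, hn⟩ := exists_nat_gt ((bu - bl) / min δ (y - x))
  set q := n + 2
  have hmesh : (bu - bl) / q < min δ (y - x) := by
    rw [← div_lt_comm₀ (lt_min hδ (sub_pos.2 hxy)) (by positivity)]
    exact hn.trans (by simp [q])
  obtain ⟨j₂, hj₂, hx₂⟩ := exists_mem_gridCell hx hblu (by omega : 0 < q)
  obtain ⟨j₁, hj₁, hy₁⟩ := exists_mem_gridCell hy hblu (by omega : 0 < q)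
  have hj : j₂ < j₁ := by
    by_contra! hj
    linarith [sub_le_of_mem_gridCell_of_le hblu.le hj hy₁ hx₂, min_le_right δ (y - x)]
  exact ⟨q, by omega, hmesh.trans_le (min_le_left _ _), j₁, j₂, hj₁, hj₂, hj, hx₂, hy₁⟩

end Grid

theorem exists_gridCell_lt_of_not_monotoneOn {lam h : ℝ → ℝ} {bl bu : ℝ}
    (hlam : ContinuousOn lam (Icc bl bu)) (hh : IntegrableOn h (Icc bl bu))
    (hlh : IntegrableOn (fun t => lam t * h t) (Icc bl bu)) (hpos : ∀ t ∈ Icc bl bu, 0 < h t)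
    (hnm : ¬ MonotoneOn lam (Icc bl bu)) :
    ∃ q : ℕ, 2 ≤ q ∧ ∃ j₁ j₂ : ℕ, j₁ < q ∧ j₂ < q ∧ j₂ < j₁ ∧
      (∫ t in (bl + ((j₁ : ℝ) / q) * (bu - bl))..
          (bl + ((j₁ : ℝ) / q) * (bu - bl) + (bu - bl) / q), lam t * h t) *
        (∫ t in (bl + ((j₂ : ℝ) / q) * (bu - bl))..
          (bl + ((j₂ : ℝ) / q) * (bu - bl) + (bu - bl) / q), h t) <
      (∫ t in (bl + ((j₂ : ℝ) / q) * (bu - bl))..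
          (bl + ((j₂ : ℝ) / q) * (bu - bl) + (bu - bl) / q), lam t * h t) *
        (∫ t in (bl + ((j₁ : ℝ) / q) * (bu - bl))..
          (bl + ((j₁ : ℝ) / q) * (bu - bl) + (bu - bl) / q), h t) := by
  obtain ⟨x, hx, y, hy, hxy, hlt⟩ : ∃ x ∈ Icc bl bu, ∃ y ∈ Icc bl bu, x ≤ y ∧ lam y < lam x := by
    simpa only [MonotoneOn, not_forall, not_le, exists_prop] using hnm
  have hxy : x < y := hxy.lt_of_ne (by rintro rfl; exact hlt.false)
  have hblu : bl < bu := hx.1.trans_lt (hxy.trans_le hy.2)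
  set ε := (lam x - lam y) / 3
  obtain ⟨δ, hδ, hδlam⟩ := Metric.uniformContinuousOn_iff.1
    (isCompact_Icc.uniformContinuousOn_of_continuous hlam) ε (by simp only [ε]; linarith)
  obtain ⟨q, hq2, hmesh, j₁, j₂, hj₁, hj₂, hj, hx₂, hy₁⟩ := exists_gridCell_mem_of_lt hx hy hxy hδ
  have hq : (0 : ℝ) < q := by positivity
  have hcell (j : ℕ) : bl + ((j : ℝ) / q) * (bu - bl) <
      bl + ((j : ℝ) / q) * (bu - bl) + (bu - bl) / q :=
    lt_add_of_pos_right _ (div_pos (sub_pos.2 hblu) hq)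
  have hnear {j : ℕ} (hj : j < q) {z : ℝ} (hz : z ∈ gridCell bl bu q j) (hzs : z ∈ Icc bl bu)
      {t : ℝ} (ht : t ∈ gridCell bl bu q j) : |lam t - lam z| < ε :=
    hδlam t (gridCell_subset_Icc hblu.le hj ht) z hzs
      ((dist_le_of_mem_gridCell ht hz).trans_lt hmesh)
  refine ⟨q, hq2, j₁, j₂, hj₁, hj₂, hj, ?_⟩
  refine integral_mul_mul_integral_lt_of_le_of_le (c₁ := lam y + ε) (c₂ := lam x - ε)
    (by simp only [ε]; linarith) hh hlh hpos (hcell j₁) (hcell j₂)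
    (gridCell_subset_Icc hblu.le hj₁) (gridCell_subset_Icc hblu.le hj₂) (fun t ht => ?_)
    (fun t ht => ?_)
  · linarith [(abs_sub_lt_iff.1 (hnear hj₁ hy₁ hy ht)).1]
  · linarith [(abs_sub_lt_iff.1 (hnear hj₂ hx₂ hx ht)).2]

theorem stmt5_general (bl bu Mb : ℝ)
    (lam h : ℝ → ℝ)
    (hlamc : ContinuousOn lam (Icc bl bu))
    (hmeas : Measurable h)
    (hh : ∀ b ∈ Icc bl bu, 0 < h b ∧ h b ≤ Mb) :
    (MonotoneOn lam (Icc bl bu) →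
      ∀ b₂ b₁ r : ℝ, b₂ < b₁ → 0 < r → bl ≤ b₂ → b₂ + r ≤ bu → bl ≤ b₁ → b₁ + r ≤ bu →
        (∫ t in b₂..(b₂ + r), lam t * h t) * (∫ t in b₁..(b₁ + r), h t) ≤
          (∫ t in b₁..(b₁ + r), lam t * h t) * (∫ t in b₂..(b₂ + r), h t)) ∧
    (¬ MonotoneOn lam (Icc bl bu) →
      ∃ q : ℕ, 2 ≤ q ∧ ∃ j₁ j₂ : ℕ, j₁ < q ∧ j₂ < q ∧ j₂ < j₁ ∧
        (∫ t in (bl + ((j₁ : ℝ) / q) * (bu - bl))..(bl + ((j₁ : ℝ) / q) * (bu - bl) + (bu - bl) / q),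
            lam t * h t) *
          (∫ t in (bl + ((j₂ : ℝ) / q) * (bu - bl))..(bl + ((j₂ : ℝ) / q) * (bu - bl) + (bu - bl) / q),
            h t) <
        (∫ t in (bl + ((j₂ : ℝ) / q) * (bu - bl))..(bl + ((j₂ : ℝ) / q) * (bu - bl) + (bu - bl) / q),
            lam t * h t) *
          (∫ t in (bl + ((j₁ : ℝ) / q) * (bu - bl))..(bl + ((j₁ : ℝ) / q) * (bu - bl) + (bu - bl) / q),
            h t)) := by
  have hpos : ∀ t ∈ Icc bl bu, 0 < h t := fun t ht => (hh t ht).1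
  have hint : IntegrableOn h (Icc bl bu) :=
    Measure.integrableOn_of_bounded measure_Icc_lt_top.ne hmeas.aestronglyMeasurable
      (M := Mb) <| (ae_restrict_mem measurableSet_Icc).mono fun t ht => by
        rw [Real.norm_of_nonneg (hpos t ht).le]; exact (hh t ht).2
  have hlint : IntegrableOn (fun t => lam t * h t) (Icc bl bu) :=
    hint.continuousOn_mul hlamc isCompact_Icc
  refine ⟨fun hm b₂ b₁ r hb hr hb₂ _ _ hb₁ => ?_,
    exists_gridCell_lt_of_not_monotoneOn hlamc hint hlint hpos⟩
  exact integral_mul_mul_integral_le_of_monotoneOn hm hint hlint (fun t ht => (hpos t ht).le)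
    (by linarith) (by linarith) hb.le (by linarith) (Icc_subset_Icc hb₂ hb₁)

/-- If `λ` is weakly increasing, the weighted average of `λ` over a left interval is at
most that over a right interval of the same length; conversely, failure of monotonicity
is detected strictly at some grid pair. -/
theorem stmt5 (bl bu Mb : ℝ) (hblt : bl < bu)
    (lam h : ℝ → ℝ)
    (hlamc : ContinuousOn lam (Icc bl bu))
    (hmeas : Measurable h)
    (hh : ∀ b ∈ Icc bl bu, 0 < h b ∧ h b ≤ Mb) :
    (MonotoneOn lam (Icc bl bu) →
      ∀ b₂ b₁ r : ℝ, b₂ < b₁ → 0 < r → bl ≤ b₂ → b₂ + r ≤ bu → bl ≤ b₁ → b₁ + r ≤ bu →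
        (∫ t in b₂..(b₂ + r), lam t * h t) * (∫ t in b₁..(b₁ + r), h t) ≤
          (∫ t in b₁..(b₁ + r), lam t * h t) * (∫ t in b₂..(b₂ + r), h t)) ∧
    (¬ MonotoneOn lam (Icc bl bu) →
      ∃ q : ℕ, 2 ≤ q ∧ ∃ j₁ j₂ : ℕ, j₁ < q ∧ j₂ < q ∧ j₂ < j₁ ∧
        (∫ t in (bl + ((j₁ : ℝ) / q) * (bu - bl))..(bl + ((j₁ : ℝ) / q) * (bu - bl) + (bu - bl) / q),
            lam t * h t) *
          (∫ t in (bl + ((j₂ : ℝ) / q) * (bu - bl))..(bl + ((j₂ : ℝ) / q) * (bu - bl) + (bu - bl) / q),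
            h t) <
        (∫ t in (bl + ((j₂ : ℝ) / q) * (bu - bl))..(bl + ((j₂ : ℝ) / q) * (bu - bl) + (bu - bl) / q),
            lam t * h t) *
          (∫ t in (bl + ((j₁ : ℝ) / q) * (bu - bl))..(bl + ((j₁ : ℝ) / q) * (bu - bl) + (bu - bl) / q),
            h t)) :=
  stmt5_general bl bu Mb lam h hlamc hmeas hh
end

section
/- Suppose valuations satisfy V_i = Γ(X)·u_i with Γ(x) > 0, where u_i are i.i.d. and independent of X. Suppose the allocation function D is homogeneous of degree zero and the payment function C is homogeneous of degree one in the action vector: D(r·b₁,…,r·b_N) = D(b₁,…,b_N) and C(r·b₁,…,r·b_N) = r·C(b₁,…,b_N) for all r > 0. If s_u is a symmetric Bayesian Nash equilibrium strategy of the homogenized game (types u_i), then s_v(v | x) := Γ(x)·s_u(v/Γ(x)) is a symmetric Bayesian Nash equilibrium strategy of the original game conditional on X = x; i.e., b^u is a best response in the homogenized game at type u if and only if b = Γ(x)·b^u is a best response in the original game at type v = Γ(x)·u. -/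
open Set MeasureTheory

/-- Homogenization: with `D` homogeneous of degree 0 and `C` homogeneous of degree 1
in actions, `b^u` is a best response at type `u` in the homogenized game iff
`b = Γ(x)·b^u` is a best response at type `v = Γ(x)·u` in the original game
(conditional on `X = x`, rivals playing the scaled strategy). -/
theorem stmt16 (N : ℕ) (hN : 2 ≤ N)
    {𝒳 : Type*} (Γ : 𝒳 → ℝ) (hΓ : ∀ x, 0 < Γ x)
    (D C : ℝ → (Fin (N - 1) → ℝ) → ℝ)
    (hD : ∀ r : ℝ, 0 < r → ∀ b a, D (r * b) (fun j => r * a j) = D b a)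
    (hC : ∀ r : ℝ, 0 < r → ∀ b a, C (r * b) (fun j => r * a j) = r * C b a)
    {Ω : Type*} [MeasurableSpace Ω] (μ : Measure Ω) [IsProbabilityMeasure μ]
    (A : Ω → Fin (N - 1) → ℝ)
    (hDint : ∀ b : ℝ, Integrable (fun ω => D b (A ω)) μ)
    (hCint : ∀ b : ℝ, Integrable (fun ω => C b (A ω)) μ)
    (hDint' : ∀ x : 𝒳, ∀ b : ℝ, Integrable (fun ω => D b (fun j => Γ x * A ω j)) μ)
    (hCint' : ∀ x : 𝒳, ∀ b : ℝ, Integrable (fun ω => C b (fun j => Γ x * A ω j)) μ)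
    (x : 𝒳) (u bu0 : ℝ) :
    (∀ b' : ℝ,
        u * (∫ ω, D b' (A ω) ∂μ) - (∫ ω, C b' (A ω) ∂μ) ≤
          u * (∫ ω, D bu0 (A ω) ∂μ) - (∫ ω, C bu0 (A ω) ∂μ)) ↔
    (∀ b' : ℝ,
        (Γ x * u) * (∫ ω, D b' (fun j => Γ x * A ω j) ∂μ) -
            (∫ ω, C b' (fun j => Γ x * A ω j) ∂μ) ≤
          (Γ x * u) * (∫ ω, D (Γ x * bu0) (fun j => Γ x * A ω j) ∂μ) -
            (∫ ω, C (Γ x * bu0) (fun j => Γ x * A ω j) ∂μ)) := by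
  set r := Γ x with hr
  have hrpos := hΓ x
  have hrne : r ≠ 0 := ne_of_gt hrpos
  have hDkey : ∀ b : ℝ, (∫ ω, D b (fun j => r * A ω j) ∂μ) = ∫ ω, D (b / r) (A ω) ∂μ := by
    intro b
    refine integral_congr_ae (Filter.Eventually.of_forall fun ω => ?_)
    have := hD r hrpos (b / r) (A ω)
    rw [mul_div_cancel₀ b hrne] at this
    exact this
  have hCkey : ∀ b : ℝ, (∫ ω, C b (fun j => r * A ω j) ∂μ) = r * ∫ ω, C (b / r) (A ω) ∂μ := by
    intro b
    rw [← integral_const_mul]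
    refine integral_congr_ae (Filter.Eventually.of_forall fun ω => ?_)
    have := hC r hrpos (b / r) (A ω)
    rw [mul_div_cancel₀ b hrne] at this
    exact this
  constructor
  · intro h b'
    have h0 := h (b' / r)
    have hb0 : r * bu0 / r = bu0 := by field_simp
    rw [hDkey b', hCkey b', hDkey (r * bu0), hCkey (r * bu0), hb0]
    calc r * u * ∫ ω, D (b' / r) (A ω) ∂μ - r * ∫ ω, C (b' / r) (A ω) ∂μ
        = r * (u * (∫ ω, D (b' / r) (A ω) ∂μ) - ∫ ω, C (b' / r) (A ω) ∂μ) := by ring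
      _ ≤ r * (u * (∫ ω, D bu0 (A ω) ∂μ) - ∫ ω, C bu0 (A ω) ∂μ) := by
          exact mul_le_mul_of_nonneg_left h0 hrpos.le
      _ = r * u * ∫ ω, D bu0 (A ω) ∂μ - r * ∫ ω, C bu0 (A ω) ∂μ := by ring
  · intro h b'
    have h0 := h (r * b')
    have hb0 : r * bu0 / r = bu0 := by field_simp
    have hb' : r * b' / r = b' := by field_simp
    rw [hDkey (r * b'), hCkey (r * b'), hDkey (r * bu0), hCkey (r * bu0), hb0, hb'] at h0
    have := (mul_le_mul_iff_right₀ hrpos).mp (by linarith : r * (u * (∫ ω, D b' (A ω) ∂μ) - ∫ ω, C b' (A ω) ∂μ) ≤ r * (u * (∫ ω, D bu0 (A ω) ∂μ) - ∫ ω, C bu0 (A ω) ∂μ))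
    exact this
end
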